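/- arXiv:2304.01329 — 4 statements merged into one kernel-verified Lean document; each statement's English description precedes it below -/
import Mathlib

section
/- Let f : ℝⁿ × ℝⁿ → ℝⁿ be continuously differentiable and globally Lipschitz in both arguments, τ > 0, and x₀ : [−τ, 0] → ℝⁿ continuous. Then there exists a unique continuous function x : [−τ, T] → ℝⁿ with x = x₀ on [−τ, 0], x differentiable on (0, T], and x'(t) = f(x(t), x(t−τ)) for all t ∈ (0, T]. -/
open Set Function
open scoped Nat

/-!
Integrating the equation, `x` is a solution iff it equals `x₀` on `[-τ, 0]` and
`x t = x₀ 0 + ∫₀ᵗ f (x s) (x (s - τ)) ds` on `[0, T]`, i.e. iff its restriction to `[-τ, T]` is a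
fixed point of the Picard operator `Φ` on `C([-τ, T], E)`. As for ordinary differential equations,
induction on `m` gives `‖Φᵐ u t - Φᵐ v t‖ ≤ (K t)ᵐ / m! ‖u - v‖`; the delayed argument `s - τ` lies
to the left of `s`, so it inherits the bound of the previous step. Hence some iterate of `Φ` is a
contraction, and `Φ` has exactly one fixed point.
-/

lemma mul_integral_pow_div_factorial (K a : ℝ) (m : ℕ) :
    K * ∫ s in (0:ℝ)..a, (K * s) ^ m / m ! = (K * a) ^ (m + 1) / (m + 1)! := by
  simp only [mul_pow, intervalIntegral.integral_div, intervalIntegral.integral_const_mul,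
    integral_pow]
  rw [Nat.factorial_succ]
  push_cast
  field_simp
  ring

lemma Continuous.comp_delay {X Y : Type*} [TopologicalSpace X] [TopologicalSpace Y]
    {f : X → X → Y} (hf : Continuous (uncurry f)) (τ : ℝ) {y : ℝ → X} (hy : Continuous y) :
    Continuous fun s => f (y s) (y (s - τ)) :=
  hf.comp (hy.prodMk (hy.comp (continuous_sub_right τ)))

theorem ContractingWith.existsUnique_isFixedPt_of_iterate {α : Type*} [MetricSpace α]
    [Nonempty α] [CompleteSpace α] {K : NNReal} {g : α → α} {m : ℕ}
    (hg : ContractingWith K g^[m]) : ∃! x, IsFixedPt g x :=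
  ⟨_, hg.isFixedPt_fixedPoint_iterate, fun _ hy => hg.fixedPoint_unique (hy.iterate m)⟩

section DelayDifferentialEquation

variable {E : Type*} [NormedAddCommGroup E] [NormedSpace ℝ E]

variable (f : E → E → E) (τ T : ℝ) (x₀ : ℝ → E)

def IsDDESolution (x : ℝ → E) : Prop :=
  ContinuousOn x (Icc (-τ) T) ∧ (∀ t ∈ Icc (-τ) (0:ℝ), x t = x₀ t) ∧
    ∀ t ∈ Ioc (0:ℝ) T, HasDerivAt x (f (x t) (x (t - τ))) t

noncomputable def ddePicard (y : ℝ → E) (t : ℝ) : E :=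
  x₀ (min t 0) + ∫ s in (0:ℝ)..max t 0, f (y s) (y (s - τ))

variable {f τ T x₀}

lemma ddePicard_of_nonpos (y : ℝ → E) {t : ℝ} (ht : t ≤ 0) : ddePicard f τ x₀ y t = x₀ t := by
  simp [ddePicard, min_eq_left ht, max_eq_right ht]

lemma ddePicard_of_nonneg (y : ℝ → E) {t : ℝ} (ht : 0 ≤ t) :
    ddePicard f τ x₀ y t = x₀ 0 + ∫ s in (0:ℝ)..t, f (y s) (y (s - τ)) := by
  simp [ddePicard, min_eq_right ht, max_eq_left ht]

lemma continuousOn_ddePicard (hf : Continuous (uncurry f)) (hτ : 0 ≤ τ)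
    (hx₀ : ContinuousOn x₀ (Icc (-τ) 0)) {y : ℝ → E} (hy : Continuous y) :
    ContinuousOn (ddePicard f τ x₀ y) (Ici (-τ)) := by
  refine ContinuousOn.add ?_ (Continuous.continuousOn ?_)
  · exact hx₀.comp (continuous_id.min continuous_const).continuousOn
      fun t ht => ⟨le_min ht (by linarith), min_le_right _ _⟩
  · exact (intervalIntegral.continuous_primitive
      (fun a b => (hf.comp_delay τ hy).intervalIntegrable a b) 0).comp
      (continuous_id.max continuous_const)

lemma dist_ddePicard_le {K : NNReal} (hlip : LipschitzWith K (uncurry f)) {y y' : ℝ → E}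
    (hy : Continuous y) (hy' : Continuous y') {g : ℝ → ℝ} (hg : Continuous g) {t : ℝ}
    (hyy' : ∀ s ∈ Ioc 0 t, dist (y s, y (s - τ)) (y' s, y' (s - τ)) ≤ g s) :
    dist (ddePicard f τ x₀ y t) (ddePicard f τ x₀ y' t) ≤ K * ∫ s in (0:ℝ)..max t 0, g s := by
  have hf := hlip.continuous
  rw [dist_eq_norm, ddePicard, ddePicard, add_sub_add_left_eq_sub,
    ← intervalIntegral.integral_sub ((hf.comp_delay τ hy).intervalIntegrable _ _)
      ((hf.comp_delay τ hy').intervalIntegrable _ _), ← intervalIntegral.integral_const_mul]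
  refine intervalIntegral.norm_integral_le_of_norm_le (le_max_right _ _)
    (Filter.Eventually.of_forall fun s hs => ?_) ((hg.const_mul _).intervalIntegrable _ _)
  have hst : s ≤ t := (le_max_iff.mp hs.2).resolve_right hs.1.not_ge
  rw [← dist_eq_norm]
  exact (hlip.dist_le_mul (y s, y (s - τ)) (y' s, y' (s - τ))).trans
    (mul_le_mul_of_nonneg_left (hyy' s ⟨hs.1, hst⟩) K.2)

lemma ddePicard_congr (hτ : 0 ≤ τ) (hT : 0 ≤ T) {y y' : ℝ → E} (h : EqOn y y' (Icc (-τ) T)) :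
    EqOn (ddePicard f τ x₀ y) (ddePicard f τ x₀ y') (Iic T) := by
  intro t ht
  rw [ddePicard, ddePicard]
  congr 1
  refine intervalIntegral.integral_congr fun s hs => ?_
  rw [uIcc_of_le (le_max_right t 0)] at hs
  have hsT : s ≤ T := hs.2.trans (max_le ht hT)
  have hsτ : s - τ ∈ Icc (-τ) T := ⟨by linarith [hs.1], by linarith⟩
  rw [h ⟨by linarith [hs.1], hsT⟩, h hsτ]

noncomputable def ddePicardMap (hf : Continuous (uncurry f)) (hτ : 0 ≤ τ) (hT : 0 ≤ T)
    (hx₀ : ContinuousOn x₀ (Icc (-τ) 0)) (u : C(Icc (-τ) T, E)) : C(Icc (-τ) T, E) :=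
  ⟨(Icc (-τ) T).domRestrict (ddePicard f τ x₀ (IccExtend ((neg_nonpos.2 hτ).trans hT) u)),
    ((continuousOn_ddePicard hf hτ hx₀ u.continuous.Icc_extend').mono
      Icc_subset_Ici_self).domRestrict⟩

section Contraction

variable {K : NNReal} (hlip : LipschitzWith K (uncurry f)) (hτ : 0 ≤ τ) (hT : 0 ≤ T)
  (hx₀ : ContinuousOn x₀ (Icc (-τ) 0))

lemma dist_iterate_ddePicardMap_apply_le (u v : C(Icc (-τ) T, E)) (m : ℕ) (t : Icc (-τ) T) :
    dist ((ddePicardMap hlip.continuous hτ hT hx₀)^[m] u t)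
        ((ddePicardMap hlip.continuous hτ hT hx₀)^[m] v t) ≤
      (K * max (t : ℝ) 0) ^ m / m ! * dist u v := by
  induction m generalizing t with
  | zero => simpa using ContinuousMap.dist_apply_le_dist t
  | succ m ih =>
    rw [iterate_succ_apply', iterate_succ_apply']
    refine (dist_ddePicard_le hlip (ContinuousMap.continuous _).Icc_extend'
      (ContinuousMap.continuous _).Icc_extend' (g := fun s => (K * s) ^ m / m ! * dist u v)
      (by fun_prop) fun s hs => ?_).trans_eq ?_
    · have hs₁ : s ∈ Icc (-τ) T := ⟨by linarith [hs.1], hs.2.trans t.2.2⟩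
      have hs₂ : s - τ ∈ Icc (-τ) T := ⟨by linarith [hs.1], by linarith [hs.2, t.2.2]⟩
      rw [IccExtend_of_mem _ _ hs₁, IccExtend_of_mem _ _ hs₂, IccExtend_of_mem _ _ hs₁,
        IccExtend_of_mem _ _ hs₂, Prod.dist_eq]
      refine max_le ((ih _).trans_eq ?_) ((ih _).trans ?_)
      · simp [max_eq_left hs.1.le]
      · gcongr
        exact max_le (by linarith [hs.1]) hs.1.le
    · rw [intervalIntegral.integral_mul_const, ← mul_assoc, mul_integral_pow_div_factorial]

lemma dist_iterate_ddePicardMap_le (u v : C(Icc (-τ) T, E)) (m : ℕ) :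
    dist ((ddePicardMap hlip.continuous hτ hT hx₀)^[m] u)
        ((ddePicardMap hlip.continuous hτ hT hx₀)^[m] v) ≤ (K * T) ^ m / m ! * dist u v := by
  refine (ContinuousMap.dist_le (by positivity)).2 fun t =>
    (dist_iterate_ddePicardMap_apply_le hlip hτ hT hx₀ u v m t).trans ?_
  gcongr
  exact max_le t.2.2 hT

lemma exists_contractingWith_iterate_ddePicardMap :
    ∃ (m : ℕ) (C : NNReal), ContractingWith C (ddePicardMap hlip.continuous hτ hT hx₀)^[m] := by
  obtain ⟨m, hm⟩ := (FloorSemiring.tendsto_pow_div_factorial_atTop ((K : ℝ) * T)).eventually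
    (gt_mem_nhds one_pos) |>.exists
  exact ⟨m, ⟨_, by positivity⟩, hm, LipschitzWith.of_dist_le_mul
    (dist_iterate_ddePicardMap_le hlip hτ hT hx₀ · · m)⟩

end Contraction

lemma ddePicard_IccExtend_eqOn_of_isFixedPt (hf : Continuous (uncurry f)) (hτ : 0 ≤ τ)
    (hT : 0 ≤ T) (hx₀ : ContinuousOn x₀ (Icc (-τ) 0)) {p : C(Icc (-τ) T, E)}
    (hp : IsFixedPt (ddePicardMap hf hτ hT hx₀) p) :
    EqOn (ddePicard f τ x₀ (IccExtend ((neg_nonpos.2 hτ).trans hT) p))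
      (IccExtend ((neg_nonpos.2 hτ).trans hT) p) (Icc (-τ) T) := fun t ht => by
  rw [IccExtend_of_mem _ _ ht]
  exact DFunLike.congr_fun hp ⟨t, ht⟩

variable [CompleteSpace E]

lemma hasDerivAt_ddePicard (hf : Continuous (uncurry f)) {y : ℝ → E} (hy : Continuous y)
    {t : ℝ} (ht : 0 < t) : HasDerivAt (ddePicard f τ x₀ y) (f (y t) (y (t - τ))) t := by
  have h := ((hf.comp_delay τ hy).integral_hasStrictDerivAt 0 t).hasDerivAt.const_add (x₀ 0)
  refine h.congr_of_eventuallyEq ?_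
  filter_upwards [Ioi_mem_nhds ht] with r hr using ddePicard_of_nonneg y (hr.le)

lemma IsDDESolution.ddePicard_eqOn (hf : Continuous (uncurry f)) (hτ : 0 ≤ τ) {z : ℝ → E}
    (hz : IsDDESolution f τ T x₀ z) : EqOn (ddePicard f τ x₀ z) z (Icc (-τ) T) := by
  obtain ⟨hzc, hz₀, hzd⟩ := hz
  intro t ht
  rcases le_or_gt t 0 with ht0 | ht0
  · rw [ddePicard_of_nonpos z ht0, hz₀ t ⟨ht.1, ht0⟩]
  have hsub : Icc 0 t ⊆ Icc (-τ) T := Icc_subset_Icc (by linarith) ht.2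
  have hdelay : MapsTo (· - τ) (Icc 0 t) (Icc (-τ) T) :=
    fun s hs => ⟨by linarith [hs.1], by linarith [hs.2, ht.2]⟩
  have hint : IntervalIntegrable (fun s => f (z s) (z (s - τ))) MeasureTheory.volume 0 t := by
    refine ContinuousOn.intervalIntegrable ?_
    rw [uIcc_of_le ht0.le]
    exact hf.comp_continuousOn
      ((hzc.mono hsub).prodMk (hzc.comp (continuous_sub_right τ).continuousOn hdelay))
  rw [ddePicard_of_nonneg z ht0.le, intervalIntegral.integral_eq_sub_of_hasDeriv_right_of_le
    ht0.le (hzc.mono hsub) (fun s hs => (hzd s ⟨hs.1, hs.2.le.trans ht.2⟩).hasDerivWithinAt) hint,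
    ← hz₀ 0 ⟨by linarith, le_rfl⟩, add_sub_cancel]

/-- Beyond `T` the integrand is frozen by `IccExtend`, so the solution has a two-sided
derivative at `t = T`. -/
lemma isDDESolution_ddePicard_of_isFixedPt (hf : Continuous (uncurry f)) (hτ : 0 ≤ τ)
    (hT : 0 ≤ T) (hx₀ : ContinuousOn x₀ (Icc (-τ) 0)) {p : C(Icc (-τ) T, E)}
    (hp : IsFixedPt (ddePicardMap hf hτ hT hx₀) p) :
    IsDDESolution f τ T x₀ (ddePicard f τ x₀ (IccExtend ((neg_nonpos.2 hτ).trans hT) p)) := by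
  have hfix := ddePicard_IccExtend_eqOn_of_isFixedPt hf hτ hT hx₀ hp
  refine ⟨(continuousOn_ddePicard hf hτ hx₀ p.continuous.Icc_extend').mono Icc_subset_Ici_self,
    fun t ht => ddePicard_of_nonpos _ ht.2, fun t ht => ?_⟩
  rw [hfix ⟨by linarith [ht.1], ht.2⟩, hfix ⟨by linarith [ht.1], by linarith [ht.2]⟩]
  exact hasDerivAt_ddePicard hf p.continuous.Icc_extend' ht.1

lemma IsDDESolution.isFixedPt_ddePicardMap (hf : Continuous (uncurry f)) (hτ : 0 ≤ τ)
    (hT : 0 ≤ T) (hx₀ : ContinuousOn x₀ (Icc (-τ) 0)) {z : ℝ → E}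
    (hz : IsDDESolution f τ T x₀ z) :
    IsFixedPt (ddePicardMap hf hτ hT hx₀) ⟨(Icc (-τ) T).domRestrict z, hz.1.domRestrict⟩ := by
  ext t
  have hext : EqOn (IccExtend ((neg_nonpos.2 hτ).trans hT) ((Icc (-τ) T).domRestrict z)) z
      (Icc (-τ) T) := fun s hs => IccExtend_of_mem _ _ hs
  exact (ddePicard_congr hτ hT hext t.2.2).trans (hz.ddePicard_eqOn hf hτ t.2)

theorem existsUnique_isDDESolution {K : NNReal} (hlip : LipschitzWith K (uncurry f))
    (hτ : 0 ≤ τ) (hT : 0 ≤ T) (hx₀ : ContinuousOn x₀ (Icc (-τ) 0)) :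
    ∃ x, IsDDESolution f τ T x₀ x ∧
      ∀ z, IsDDESolution f τ T x₀ z → EqOn x z (Icc (-τ) T) := by
  have hf := hlip.continuous
  obtain ⟨m, C, hC⟩ := exists_contractingWith_iterate_ddePicardMap hlip hτ hT hx₀
  obtain ⟨p, hp, hp_unique⟩ := hC.existsUnique_isFixedPt_of_iterate
  refine ⟨_, isDDESolution_ddePicard_of_isFixedPt hf hτ hT hx₀ hp, fun z hz t ht => ?_⟩
  rw [ddePicard_IccExtend_eqOn_of_isFixedPt hf hτ hT hx₀ hp ht, IccExtend_of_mem _ _ ht,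
    ← hp_unique _ (hz.isFixedPt_ddePicardMap hf hτ hT hx₀)]
  rfl

end DelayDifferentialEquation

theorem dde_existence_uniqueness_general {n : ℕ}
    (f : (Fin n → ℝ) → (Fin n → ℝ) → (Fin n → ℝ))
    (K : NNReal) (hlip : LipschitzWith K (Function.uncurry f))
    (τ T : ℝ) (hτ : 0 < τ) (hT : 0 < T)
    (x₀ : ℝ → (Fin n → ℝ)) (hx₀ : ContinuousOn x₀ (Icc (-τ) 0)) :
    ∃ x : ℝ → (Fin n → ℝ),
      (ContinuousOn x (Icc (-τ) T) ∧
        (∀ t ∈ Icc (-τ) (0:ℝ), x t = x₀ t) ∧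
        (∀ t ∈ Ioc (0:ℝ) T, HasDerivAt x (f (x t) (x (t - τ))) t)) ∧
      ∀ z : ℝ → (Fin n → ℝ),
        (ContinuousOn z (Icc (-τ) T) ∧
          (∀ t ∈ Icc (-τ) (0:ℝ), z t = x₀ t) ∧
          (∀ t ∈ Ioc (0:ℝ) T, HasDerivAt z (f (z t) (z (t - τ))) t)) →
        EqOn x z (Icc (-τ) T) :=
  existsUnique_isDDESolution hlip hτ.le hT.le hx₀

/-- Existence and uniqueness for a delay differential equation with a single constant delay,
globally Lipschitz C¹ right-hand side, and continuous history, on the horizon `[-τ, T]`. -/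
theorem dde_existence_uniqueness {n : ℕ}
    (f : (Fin n → ℝ) → (Fin n → ℝ) → (Fin n → ℝ))
    (hf : ContDiff ℝ 1 (Function.uncurry f))
    (K : NNReal) (hlip : LipschitzWith K (Function.uncurry f))
    (τ T : ℝ) (hτ : 0 < τ) (hT : 0 < T)
    (x₀ : ℝ → (Fin n → ℝ)) (hx₀ : ContinuousOn x₀ (Icc (-τ) 0)) :
    ∃ x : ℝ → (Fin n → ℝ),
      (ContinuousOn x (Icc (-τ) T) ∧
        (∀ t ∈ Icc (-τ) (0:ℝ), x t = x₀ t) ∧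
        (∀ t ∈ Ioc (0:ℝ) T, HasDerivAt x (f (x t) (x (t - τ))) t)) ∧
      ∀ z : ℝ → (Fin n → ℝ),
        (ContinuousOn z (Icc (-τ) T) ∧
          (∀ t ∈ Icc (-τ) (0:ℝ), z t = x₀ t) ∧
          (∀ t ∈ Ioc (0:ℝ) T, HasDerivAt z (f (z t) (z (t - τ))) t)) →
        EqOn x z (Icc (-τ) T) :=
  dde_existence_uniqueness_general f K hlip τ T hτ hT x₀ hx₀
end

section
/- Let x : [0, T] → ℝⁿ solve x'(t) = f(x(t), y(t)) where y(t) = x(t−τ) for t > τ and y(t) = x₀(t−τ) for t ≤ τ, and let δx solve the linear variational equation δx'(t) = Df_x(x(t), y(t))·δx(t) + Df_y(x(t), y(t))·δx(t−τ)·𝟙_{t>τ} with δx = 0 on [−τ, 0] (more generally, the linearization along x). Let p : [0, T] → (ℝⁿ)* solve the adjoint equation p'(t) = −p(t)·Df_x(x(t), y(t)) − p(t+τ)·Df_y(x(t+τ), x(t))·𝟙_{t < T−τ}, with p(t) = 0 for t > T. Then the pairing t ↦ p(t)·δx(t) + ∫_{t−τ}^{t} p(s+τ)·Df_y(x(s+τ),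 x(s))·δx(s)·𝟙_{s < T−τ} ds is constant on [τ, T]. -/
/-!
Differentiate `F t = ⟪p t, δx t⟫ + ∫_{t-τ}^t ⟪p (s+τ), B s (δx s)⟫ ds`, where
`B s = Df_y(x(s+τ), x(s))`. The terms in `Df_x` cancel by the defining property of the adjoint;
the delayed term `⟪p t, B (t-τ) δx (t-τ)⟫` of `⟪p, δx'⟫` cancels the lower endpoint of the
integral, and the advanced term `-⟪p (t+τ), B t δx t⟫` of `⟪p', δx⟫` its upper endpoint.
The indicators `𝟙_{t>τ}` and `𝟙_{s<T-τ}` are harmless since `δx` vanishes on `[-τ, 0]` and `p`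
on `[T, ∞)`. Hence `F' = 0` on `[τ, T]`.
-/

open Set RealInnerProductSpace
open Filter Topology MeasureTheory intervalIntegral

section SlidingWindow

variable {E : Type*} [NormedAddCommGroup E] {g : ℝ → E} {a : ℝ}

theorem ContinuousOn.intervalIntegrable_of_Ioi (hg : ContinuousOn g (Ioi a)) {b c : ℝ}
    (hb : a < b) (hc : a < c) : IntervalIntegrable g volume b c :=
  (hg.mono fun _ hs => lt_of_lt_of_le (lt_min hb hc) hs.1).intervalIntegrable

variable [NormedSpace ℝ E] [CompleteSpace E]

theorem ContinuousOn.hasDerivAt_integral_of_Ioi (hg : ContinuousOn g (Ioi a)) {b c : ℝ}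
    (hb : a < b) (hc : a < c) : HasDerivAt (fun u => ∫ s in b..u, g s) (g c) c :=
  integral_hasDerivAt_right (hg.intervalIntegrable_of_Ioi hb hc)
    (hg.stronglyMeasurableAtFilter isOpen_Ioi c hc) (hg.continuousAt (Ioi_mem_nhds hc))

theorem ContinuousOn.hasDerivAt_integral_sliding_window (hg : ContinuousOn g (Ioi a))
    {τ t : ℝ} (hτ : 0 ≤ τ) (ht : a < t - τ) :
    HasDerivAt (fun u => ∫ s in (u - τ)..u, g s) (g t - g (t - τ)) t := by
  have hright := hg.hasDerivAt_integral_of_Ioi ht (show a < t by linarith)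
  have hleft := (hg.hasDerivAt_integral_of_Ioi ht ht).comp_sub_const t τ
  refine (hright.sub hleft).congr_of_eventuallyEq ?_
  filter_upwards [(continuous_sub_right τ).continuousAt.preimage_mem_nhds (Ioi_mem_nhds ht)]
    with u (hu : a < u - τ)
  exact (integral_interval_sub_left (hg.intervalIntegrable_of_Ioi ht (by linarith))
    (hg.intervalIntegrable_of_Ioi ht hu)).symm

end SlidingWindow

section PartialDerivative

variable {E F G : Type*} [NormedAddCommGroup E] [NormedSpace ℝ E] [NormedAddCommGroup F]
  [NormedSpace ℝ F] [NormedAddCommGroup G] [NormedSpace ℝ G]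

theorem ContDiff.continuous_fderiv_right {f : E → F → G} (hf : ContDiff ℝ 1 (Function.uncurry f)) :
    Continuous fun z : E × F => fderiv ℝ (f z.1) z.2 := by
  have hpartial : ∀ z : E × F, fderiv ℝ (f z.1) z.2 =
      (fderiv ℝ (Function.uncurry f) z).comp (ContinuousLinearMap.inr ℝ E F) := fun ⟨a, b⟩ =>
    ((hf.differentiable one_ne_zero (a, b)).hasFDerivAt.comp b
      (hasFDerivAt_prodMk_right a b)).fderiv
  simp_rw [hpartial]
  exact (hf.continuous_fderiv one_ne_zero).clm_comp continuous_const

end PartialDerivative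

section DelayedPairing

variable {E : Type*} [NormedAddCommGroup E] [InnerProductSpace ℝ E] [CompleteSpace E]

noncomputable def delayedPairing (p q : ℝ → E) (B : ℝ → E →L[ℝ] E) (τ t : ℝ) : ℝ :=
  ⟪p t, q t⟫ + ∫ s in (t - τ)..t, ⟪p (s + τ), B s (q s)⟫

variable {p q : ℝ → E} {A B : ℝ → E →L[ℝ] E} {a τ : ℝ}

theorem hasDerivAt_delayedPairing
    (hg : ContinuousOn (fun s => ⟪p (s + τ), B s (q s)⟫) (Ioi a)) (hτ : 0 ≤ τ) {t : ℝ}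
    (ht : a < t - τ) (hq : HasDerivAt q (A t (q t) + B (t - τ) (q (t - τ))) t)
    (hp : HasDerivAt p (-(A t).adjoint (p t) - (B t).adjoint (p (t + τ))) t) :
    HasDerivAt (delayedPairing p q B τ) 0 t := by
  refine ((hp.inner ℝ hq).add (hg.hasDerivAt_integral_sliding_window hτ ht)).congr_deriv ?_
  simp only [inner_add_right, inner_sub_left, inner_neg_left,
    ContinuousLinearMap.adjoint_inner_left, sub_add_cancel]
  ring

theorem delayedPairing_eq_of_mem_Icc
    (hg : ContinuousOn (fun s => ⟪p (s + τ), B s (q s)⟫) (Ioi a)) (hτ : 0 ≤ τ) {t₀ T : ℝ}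
    (ha : a < t₀ - τ)
    (hq : ∀ t ∈ Icc t₀ T, HasDerivAt q (A t (q t) + B (t - τ) (q (t - τ))) t)
    (hp : ∀ t ∈ Icc t₀ T, HasDerivAt p (-(A t).adjoint (p t) - (B t).adjoint (p (t + τ))) t) :
    ∀ t ∈ Icc t₀ T, delayedPairing p q B τ t = delayedPairing p q B τ t₀ := by
  have hderiv : ∀ t ∈ Icc t₀ T, HasDerivAt (delayedPairing p q B τ) 0 t := fun t ht =>
    hasDerivAt_delayedPairing hg hτ (by linarith [ht.1]) (hq t ht) (hp t ht)
  exact constant_of_has_deriv_right_zero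
    (fun t ht => (hderiv t ht).continuousAt.continuousWithinAt)
    (fun t ht => (hderiv t (Ico_subset_Icc_self ht)).hasDerivWithinAt)

end DelayedPairing

theorem eq_zero_of_le_of_continuousAt {E : Type*} [TopologicalSpace E] [Zero E] [T1Space E]
    {p : ℝ → E} {T : ℝ} (hpT : ContinuousAt p T) (hp0 : ∀ t, T < t → p t = 0) :
    ∀ t, T ≤ t → p t = 0 := by
  intro t ht
  rcases ht.eq_or_lt with rfl | hlt
  · exact hpT.continuousWithinAt.eq_const_of_mem_closure (by simp : T ∈ closure (Ioi T)) hp0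
  · exact hp0 t hlt

theorem continuousOn_inner_delay_kernel {E : Type*} [NormedAddCommGroup E] [InnerProductSpace ℝ E]
    {f : E → E → E} (hf : ContDiff ℝ 1 (Function.uncurry f)) {x q p : ℝ → E} {τ T : ℝ}
    (hτ : 0 ≤ τ) (hx : ∀ t ∈ Icc 0 T, ContinuousAt x t) (hq : ∀ t ∈ Icc 0 T, ContinuousAt q t)
    (hp : ∀ t ∈ Icc 0 T, ContinuousAt p t) (hq0 : ∀ t ∈ Icc (-τ) 0, q t = 0)
    (hp0 : ∀ t, T < t → p t = 0) :
    ContinuousOn (fun s => ⟪p (s + τ), fderiv ℝ (fun v => f (x (s + τ)) v) (x s) (q s)⟫)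
      (Ioi (-τ)) := by
  intro s hs
  refine ContinuousAt.continuousWithinAt ?_
  rcases lt_or_ge s 0 with hneg | hnonneg
  · refine continuousAt_const.congr (f := fun _ => (0 : ℝ)) ?_
    filter_upwards [Ioo_mem_nhds hs hneg] with u hu
    simp [hq0 u ⟨hu.1.le, hu.2.le⟩]
  rcases le_or_gt s (T - τ) with hle | hgt
  · have hs : s ∈ Icc 0 T := ⟨hnonneg, by linarith⟩
    have hsτ : s + τ ∈ Icc 0 T := ⟨by linarith, by linarith⟩
    have hshift : ∀ {φ : ℝ → E}, ContinuousAt φ (s + τ) → ContinuousAt (fun u => φ (u + τ)) s :=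
      fun h => h.comp_of_eq (continuous_add_const τ).continuousAt rfl
    exact (hshift (hp _ hsτ)).inner ((hf.continuous_fderiv_right.continuousAt.comp_of_eq
      ((hshift (hx _ hsτ)).prodMk (hx s hs)) rfl).clm_apply (hq s hs))
  · refine continuousAt_const.congr (f := fun _ => (0 : ℝ)) ?_
    filter_upwards [Ioi_mem_nhds hgt] with u (hu : T - τ < u)
    simp [hp0 (u + τ) (by linarith)]

theorem dde_adjoint_variational_pairing_constant_general {n : ℕ}
    (f : EuclideanSpace ℝ (Fin n) → EuclideanSpace ℝ (Fin n) → EuclideanSpace ℝ (Fin n))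
    (hf : ContDiff ℝ 1 (Function.uncurry f))
    (τ T : ℝ) (hτ : 0 < τ)
    (x₀ x y δx p : ℝ → EuclideanSpace ℝ (Fin n))
    (hy : ∀ t, y t = if τ < t then x (t - τ) else x₀ (t - τ))
    (hx : ∀ t ∈ Icc (0:ℝ) T, HasDerivAt x (f (x t) (y t)) t)
    (hδ0 : ∀ t ∈ Icc (-τ) (0:ℝ), δx t = 0)
    (hδ : ∀ t ∈ Icc (0:ℝ) T, HasDerivAt δx
      ((fderiv ℝ (fun u => f u (y t)) (x t)) (δx t) +
        (if τ < t then (fderiv ℝ (fun v => f (x t) v) (y t)) (δx (t - τ)) else 0)) t)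
    (hp0 : ∀ t, T < t → p t = 0)
    (hp : ∀ t ∈ Icc (0:ℝ) T, HasDerivAt p
      (-(ContinuousLinearMap.adjoint (fderiv ℝ (fun u => f u (y t)) (x t))) (p t) -
        (if t < T - τ then
          (ContinuousLinearMap.adjoint (fderiv ℝ (fun v => f (x (t + τ)) v) (x t))) (p (t + τ))
        else 0)) t) :
    ∀ t₁ ∈ Icc τ T, ∀ t₂ ∈ Icc τ T,
      (⟪p t₁, δx t₁⟫ + ∫ s in (t₁ - τ)..t₁,
          (if s < T - τ then
            ⟪p (s + τ), (fderiv ℝ (fun v => f (x (s + τ)) v) (x s)) (δx s)⟫ else 0)) =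
      (⟪p t₂, δx t₂⟫ + ∫ s in (t₂ - τ)..t₂,
          (if s < T - τ then
            ⟪p (s + τ), (fderiv ℝ (fun v => f (x (s + τ)) v) (x s)) (δx s)⟫ else 0)) := by
  intro t₁ ht₁ t₂ ht₂
  have hT : 0 ≤ T := hτ.le.trans (ht₁.1.trans ht₁.2)
  have hpT := eq_zero_of_le_of_continuousAt (hp T ⟨hT, le_rfl⟩).continuousAt hp0
  have hδ' : ∀ t ∈ Icc τ T, HasDerivAt δx (fderiv ℝ (fun u => f u (y t)) (x t) (δx t) +
      fderiv ℝ (fun v => f (x (t - τ + τ)) v) (x (t - τ)) (δx (t - τ))) t := by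
    intro t ht
    convert hδ t ⟨by linarith [ht.1], ht.2⟩ using 2
    rcases ht.1.eq_or_lt with rfl | hlt
    · rw [if_neg (lt_irrefl _), sub_self, hδ0 0 ⟨by linarith, le_rfl⟩, map_zero]
    · rw [if_pos hlt, hy t, if_pos hlt, sub_add_cancel]
  have hp' : ∀ t ∈ Icc τ T, HasDerivAt p
      (-(fderiv ℝ (fun u => f u (y t)) (x t)).adjoint (p t) -
        (fderiv ℝ (fun v => f (x (t + τ)) v) (x t)).adjoint (p (t + τ))) t := by
    intro t ht
    convert hp t ⟨by linarith [ht.1], ht.2⟩ using 2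
    exact (ite_eq_left_iff.mpr fun h => by rw [hpT (t + τ) (by linarith), map_zero]).symm
  have hindicator : ∀ s, (if s < T - τ then
      ⟪p (s + τ), (fderiv ℝ (fun v => f (x (s + τ)) v) (x s)) (δx s)⟫ else 0) =
      ⟪p (s + τ), (fderiv ℝ (fun v => f (x (s + τ)) v) (x s)) (δx s)⟫ := fun s =>
    ite_eq_left_iff.mpr fun h => by rw [hpT (s + τ) (by linarith), inner_zero_left]
  have hconst := delayedPairing_eq_of_mem_Icc
    (continuousOn_inner_delay_kernel hf hτ.le (fun t ht => (hx t ht).continuousAt)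
      (fun t ht => (hδ t ht).continuousAt) (fun t ht => (hp t ht).continuousAt) hδ0 hp0)
    hτ.le (by linarith : -τ < τ - τ) hδ' hp'
  simp only [hindicator]
  exact (hconst t₁ ht₁).trans (hconst t₂ ht₂).symm

/-- Duality between the variational and adjoint flows of a DDE: the pairing
`t ↦ ⟪p(t), δx(t)⟫ + ∫_{t-τ}^{t} ⟪p(s+τ), Df_y(x(s+τ), x(s)) δx(s)⟫ 𝟙_{s<T-τ} ds`
is constant on `[τ, T]`. -/
theorem dde_adjoint_variational_pairing_constant {n : ℕ}
    (f : EuclideanSpace ℝ (Fin n) → EuclideanSpace ℝ (Fin n) → EuclideanSpace ℝ (Fin n))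
    (hf : ContDiff ℝ 1 (Function.uncurry f))
    (τ T : ℝ) (hτ : 0 < τ) (hT : τ < T)
    (x₀ x y δx p : ℝ → EuclideanSpace ℝ (Fin n))
    (hy : ∀ t, y t = if τ < t then x (t - τ) else x₀ (t - τ))
    (hx : ∀ t ∈ Icc (0:ℝ) T, HasDerivAt x (f (x t) (y t)) t)
    (hδ0 : ∀ t ∈ Icc (-τ) (0:ℝ), δx t = 0)
    (hδ : ∀ t ∈ Icc (0:ℝ) T, HasDerivAt δx
      ((fderiv ℝ (fun u => f u (y t)) (x t)) (δx t) +
        (if τ < t then (fderiv ℝ (fun v => f (x t) v) (y t)) (δx (t - τ)) else 0)) t)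
    (hp0 : ∀ t, T < t → p t = 0)
    (hp : ∀ t ∈ Icc (0:ℝ) T, HasDerivAt p
      (-(ContinuousLinearMap.adjoint (fderiv ℝ (fun u => f u (y t)) (x t))) (p t) -
        (if t < T - τ then
          (ContinuousLinearMap.adjoint (fderiv ℝ (fun v => f (x (t + τ)) v) (x t))) (p (t + τ))
        else 0)) t) :
    ∀ t₁ ∈ Icc τ T, ∀ t₂ ∈ Icc τ T,
      (⟪p t₁, δx t₁⟫ + ∫ s in (t₁ - τ)..t₁,
          (if s < T - τ then
            ⟪p (s + τ), (fderiv ℝ (fun v => f (x (s + τ)) v) (x s)) (δx s)⟫ else 0)) =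
      (⟪p t₂, δx t₂⟫ + ∫ s in (t₂ - τ)..t₂,
          (if s < T - τ then
            ⟪p (s + τ), (fderiv ℝ (fun v => f (x (s + τ)) v) (x s)) (δx s)⟫ else 0)) :=
  dde_adjoint_variational_pairing_constant_general f hf τ T hτ x₀ x y δx p hy hx hδ0 hδ hp0 hp
end

section
/- For the scalar linear DDE x'(t) = a x(t) + b x(t−τ) with constant history x ≡ c on [−τ, 0] and a ≠ 0, the solution x(t; τ) on the second interval [τ, 2τ] is differentiable with respect to the delay τ, and for fixed t ∈ (τ, 2τ), ∂x/∂τ(t; τ) = −b·∫_τ^t e^{a(t−s)} x'(s−τ) ds. -/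
/-!
Write `A = c + b c / a`. On `[0, τ]` the delayed term is the constant history, so `x` solves the
linear ODE `x' = a x + b c` and equals `firstStep u = A e^{a u} - b c / a`. On `[τ, 2τ]` the delayed
term is `b firstStep (u - τ)`, and `x u = firstStep u + delayCorrection (u - τ)`, where
`delayCorrection' w = a b A w e^{a w}`; both identifications are by uniqueness for `y' = a y + g`.
So near the given delay `x(τ'; t) = firstStep t + delayCorrection (t - τ')`, whose `τ'`-derivative
is `-a b A (t - τ) e^{a (t - τ)}`. This is the claimed integral, because its integrand
`e^{a (t - s)} x'(s - τ) = a A e^{a (t - τ)}` does not depend on `s`.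
-/

open Set Real Filter Topology

/-- Uniqueness for the linear ODE `y' = a y + g`: `e^{-a u} (x u - y u)` has zero derivative. -/
theorem eqOn_Icc_of_hasDerivAt_linear {a p q : ℝ} {g x y : ℝ → ℝ}
    (hx : ContinuousOn x (Icc p q)) (hy : ContinuousOn y (Icc p q))
    (hx' : ∀ u ∈ Ioo p q, HasDerivAt x (a * x u + g u) u)
    (hy' : ∀ u ∈ Ioo p q, HasDerivAt y (a * y u + g u) u) (hp : x p = y p) :
    EqOn x y (Icc p q) := by
  set w : ℝ → ℝ := fun u => exp (-(a * u)) * (x u - y u)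
  have hw_cont : ContinuousOn w (Icc p q) := by fun_prop
  have hw' : ∀ u ∈ Ioo p q, HasDerivAt w 0 u := by
    intro u hu
    have hexp : HasDerivAt (fun u => exp (-(a * u))) (exp (-(a * u)) * -a) u :=
      ((hasDerivAt_id u).const_mul a).neg.exp.congr_deriv (by simp)
    exact (hexp.mul ((hx' u hu).sub (hy' u hu))).congr_deriv (by simp only [Pi.sub_apply]; ring)
  rintro u ⟨hpu, huq⟩
  rcases hpu.eq_or_lt with rfl | hpu
  · exact hp
  obtain ⟨v, -, hslope⟩ := exists_hasDerivAt_eq_slope w (fun _ => 0) hpu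
    (hw_cont.mono (Icc_subset_Icc_right huq)) fun v hv => hw' v ⟨hv.1, hv.2.trans_le huq⟩
  have hwu : w u = w p := by
    rw [eq_comm, div_eq_zero_iff, sub_eq_zero] at hslope
    exact hslope.resolve_right (sub_ne_zero.2 hpu.ne')
  simpa [w, hp, exp_ne_zero, sub_eq_zero] using hwu

namespace LinearDDE

structure IsSolution (a b c τ : ℝ) (x : ℝ → ℝ) : Prop where
  history : ∀ s ∈ Icc (-τ) 0, x s = c
  continuousOn : ContinuousOn x (Ici (-τ))
  hasDerivAt : ∀ u ∈ Ioi 0, HasDerivAt x (a * x u + b * x (u - τ)) u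

noncomputable def firstStep (a b c u : ℝ) : ℝ := (c + b * c / a) * exp (a * u) - b * c / a

noncomputable def delayCorrection (a k w : ℝ) : ℝ := k * (w * exp (a * w) + (1 - exp (a * w)) / a)

noncomputable def secondStep (a b c τ u : ℝ) : ℝ :=
  firstStep a b c u + delayCorrection a (b * (c + b * c / a)) (u - τ)

variable {a b c τ : ℝ} {x : ℝ → ℝ}

theorem hasDerivAt_firstStep (u : ℝ) :
    HasDerivAt (firstStep a b c) (a * (c + b * c / a) * exp (a * u)) u :=
  ((((hasDerivAt_id u).const_mul a).exp.const_mul _).sub_const _).congr_deriv (by rw [id]; ring)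

theorem firstStep_ode (ha : a ≠ 0) (u : ℝ) :
    a * firstStep a b c u + b * c = a * (c + b * c / a) * exp (a * u) := by
  unfold firstStep; field_simp; ring

theorem hasDerivAt_delayCorrection (ha : a ≠ 0) (k w : ℝ) :
    HasDerivAt (delayCorrection a k) (a * k * w * exp (a * w)) w := by
  have hexp : HasDerivAt (fun w => exp (a * w)) (exp (a * w) * a) w :=
    ((hasDerivAt_id w).const_mul a).exp.congr_deriv (by simp)
  refine ((((hasDerivAt_id w).mul hexp).add ((hexp.const_sub 1).div_const a)).const_mul k
    ).congr_deriv ?_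
  simp only [id]; field_simp; ring

theorem hasDerivAt_secondStep (ha : a ≠ 0) (u : ℝ) :
    HasDerivAt (secondStep a b c τ) (a * secondStep a b c τ u + b * firstStep a b c (u - τ)) u := by
  refine ((hasDerivAt_firstStep u).add ((hasDerivAt_delayCorrection ha _ (u - τ)).comp u
    ((hasDerivAt_id u).sub_const τ))).congr_deriv ?_
  simp only [secondStep, firstStep, delayCorrection]; field_simp; ring

theorem hasDerivAt_secondStep_delay (ha : a ≠ 0) (τ t : ℝ) :
    HasDerivAt (fun τ' => secondStep a b c τ' t)
      (-(a * b * (c + b * c / a) * (t - τ) * exp (a * (t - τ)))) τ := by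
  refine (((hasDerivAt_delayCorrection ha _ (t - τ)).comp τ
    ((hasDerivAt_id τ).const_sub t)).const_add (firstStep a b c t)).congr_deriv ?_
  ring

theorem IsSolution.eqOn_firstStep (hx : IsSolution a b c τ x) (ha : a ≠ 0) (hτ : 0 ≤ τ) :
    EqOn x (firstStep a b c) (Icc 0 τ) := by
  refine eqOn_Icc_of_hasDerivAt_linear (g := fun _ => b * c)
    (hx.continuousOn.mono (Icc_subset_Ici_self.trans (Ici_subset_Ici.2 (by linarith))))
    (fun u _ => (hasDerivAt_firstStep u).continuousAt.continuousWithinAt)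
    (fun u hu => ?_) (fun u _ => (hasDerivAt_firstStep u).congr_deriv (firstStep_ode ha u).symm)
    ?_
  · simpa [hx.history (u - τ) ⟨by linarith [hu.1], by linarith [hu.2]⟩] using hx.hasDerivAt u hu.1
  · simp [firstStep, hx.history 0 ⟨by linarith, le_rfl⟩]

theorem IsSolution.eqOn_secondStep (hx : IsSolution a b c τ x) (ha : a ≠ 0) (hτ : 0 ≤ τ) :
    EqOn x (secondStep a b c τ) (Icc τ (2 * τ)) := by
  refine eqOn_Icc_of_hasDerivAt_linear (g := fun u => b * firstStep a b c (u - τ))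
    (hx.continuousOn.mono (Icc_subset_Ici_self.trans (Ici_subset_Ici.2 (by linarith))))
    (fun u _ => (hasDerivAt_secondStep ha u).continuousAt.continuousWithinAt)
    (fun u hu => ?_) (fun u _ => hasDerivAt_secondStep ha u) ?_
  · rw [← hx.eqOn_firstStep ha hτ ⟨by linarith [hu.1], by linarith [hu.2]⟩]
    exact hx.hasDerivAt u (by simp only [mem_Ioi]; linarith [hu.1])
  · simp [secondStep, delayCorrection, hx.eqOn_firstStep ha hτ ⟨hτ, le_rfl⟩]

theorem IsSolution.deriv_eq_of_mem_Ioc (hx : IsSolution a b c τ x) (ha : a ≠ 0) {u : ℝ}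
    (hu : u ∈ Ioc 0 τ) :
    deriv x u = a * (c + b * c / a) * exp (a * u) := by
  rw [(hx.hasDerivAt u hu.1).deriv,
    hx.eqOn_firstStep ha (hu.1.le.trans hu.2) (Ioc_subset_Icc_self hu),
    hx.history (u - τ) ⟨by linarith [hu.1], by linarith [hu.2]⟩, firstStep_ode ha]

theorem IsSolution.integral_exp_mul_deriv_delayed (hx : IsSolution a b c τ x) (ha : a ≠ 0) {t : ℝ}
    (hτt : τ ≤ t) (ht : t ≤ 2 * τ) :
    ∫ s in τ..t, exp (a * (t - s)) * deriv x (s - τ) =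
      (t - τ) * (a * (c + b * c / a) * exp (a * (t - τ))) := by
  have hintegrand : EqOn (fun s => exp (a * (t - s)) * deriv x (s - τ))
      (fun _ => a * (c + b * c / a) * exp (a * (t - τ))) (uIoc τ t) := by
    intro s hs
    rw [uIoc_of_le hτt] at hs
    dsimp only
    rw [hx.deriv_eq_of_mem_Ioc ha ⟨by linarith [hs.1], by linarith [hs.2]⟩, mul_left_comm,
      ← exp_add]
    ring_nf
  rw [intervalIntegral.integral_congr_ae (.of_forall hintegrand), intervalIntegral.integral_const,
    smul_eq_mul]

end LinearDDE

/-- Sensitivity of the solution of the scalar linear DDE `x'(t) = a x(t) + b x(t-τ)`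
(constant history `c`) with respect to the delay, on the second interval `(τ, 2τ)`:
`∂x/∂τ(t; τ) = -b ∫_τ^t e^{a(t-s)} x'(s-τ) ds`. -/
theorem linear_dde_delay_sensitivity (a b c τ : ℝ) (ha : a ≠ 0) (hτ : 0 < τ)
    (x : ℝ → ℝ → ℝ)
    (hist : ∀ τ' > (0:ℝ), ∀ s ∈ Icc (-τ') (0:ℝ), x τ' s = c)
    (hcont : ∀ τ' > (0:ℝ), ContinuousOn (x τ') (Ici (-τ')))
    (hsol : ∀ τ' > (0:ℝ), ∀ t ∈ Ioi (0:ℝ),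
      HasDerivAt (x τ') (a * x τ' t + b * x τ' (t - τ')) t)
    (t : ℝ) (ht : t ∈ Ioo τ (2 * τ)) :
    HasDerivAt (fun τ' => x τ' t)
      (-b * ∫ s in τ..t, Real.exp (a * (t - s)) * deriv (x τ) (s - τ)) τ := by
  obtain ⟨hτt, ht2τ⟩ := ht
  have hx : ∀ τ' > 0, LinearDDE.IsSolution a b c τ' (x τ') :=
    fun τ' hτ' => ⟨hist τ' hτ', hcont τ' hτ', hsol τ' hτ'⟩
  have hlocal : (fun τ' => x τ' t) =ᶠ[𝓝 τ] fun τ' => LinearDDE.secondStep a b c τ' t := by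
    filter_upwards [Ioo_mem_nhds (by linarith : t / 2 < τ) hτt] with τ' hτ'
    have hτ'0 : 0 < τ' := by linarith [hτ'.1]
    exact (hx τ' hτ'0).eqOn_secondStep ha hτ'0.le ⟨hτ'.2.le, by linarith [hτ'.1]⟩
  rw [(hx τ hτ).integral_exp_mul_deriv_delayed ha hτt.le ht2τ.le]
  exact ((LinearDDE.hasDerivAt_secondStep_delay ha τ t).congr_of_eventuallyEq
    hlocal).congr_deriv (by ring)
end

section
/- Suppose x'(t) = f(x(t), c, θ) on [0, T] (T ≤ τ, constant delayed value c), with loss L = Σ_j (X_j − x(t_j))² and f C¹. Let p solve the extended adjoint equation p'(t) = −∂f/∂x(x(t), c, θ)·p(t) + 2 Σ_j (x(t_j) − X_j)·δ(t − t_j) interpreted as: p has jump discontinuities p(t_j⁻) = p(t_j⁺) + 2(x(t_j) − X_j) at each sample time and solves p' = −(∂f/∂x)p elsewhere, with p(T⁺) = 0. Then dL/dθ = ∫₀^T p(t)·(∂f/∂θ)(x(t), c, θ) dt. -/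
/-!
The loss has derivative `∑ⱼ Jⱼ y(tⱼ)` with `Jⱼ = 2 (x(tⱼ) - Xⱼ)`, where `y = ∂x/∂θ` solves the
variational equation `y' = ∂ₓf y + ∂_θ f`, `y(0) = 0`. Differentiability in `θ` follows from a
Grönwall estimate for `x_θ - x_θ₀ - (θ - θ₀) y`, valid as long as `x_θ` stays in a thin tube around
`x_θ₀` on which the first-order Taylor expansion of `f` is uniform; the estimate itself shows, by
continuous induction, that the tube is never left.

On the adjoint side `(p y)' = p ∂_θ f` between sample times, and the jumps `Jⱼ` of `p` are
compensated by the continuous function `s ↦ (p s - ∑_{s < tⱼ} Jⱼ) y s + ∑ⱼ Jⱼ y (min s tⱼ)`.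
It is an antiderivative of `p ∂_θ f` off the sample times, and its increment over `[0, T]` is
`∑ⱼ Jⱼ y(tⱼ)` because `p T = 0` and `y 0 = 0`.
-/

open Set Filter Topology MeasureTheory

theorem HasFDerivAt.hasDerivAt_comp_prodMk_left {G : Type*} [NormedAddCommGroup G]
    [NormedSpace ℝ G] {F : ℝ × ℝ → G} {D : ℝ × ℝ →L[ℝ] G} {u v : ℝ} (hF : HasFDerivAt F D (u, v)) :
    HasDerivAt (fun u' => F (u', v)) (D (1, 0)) u := by
  simpa [Function.comp_def] using (hF.comp u (hasFDerivAt_prodMk_left u v)).hasDerivAt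

theorem HasFDerivAt.hasDerivAt_comp_prodMk_right {G : Type*} [NormedAddCommGroup G]
    [NormedSpace ℝ G] {F : ℝ × ℝ → G} {D : ℝ × ℝ →L[ℝ] G} {u v : ℝ} (hF : HasFDerivAt F D (u, v)) :
    HasDerivAt (fun v' => F (u, v')) (D (0, 1)) v := by
  simpa [Function.comp_def] using (hF.comp v (hasFDerivAt_prodMk_right u v)).hasDerivAt

theorem ContinuousLinearMap.apply_prod_eq (D : ℝ × ℝ →L[ℝ] ℝ) (h k : ℝ) :
    D (h, k) = D (1, 0) * h + D (0, 1) * k := by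
  rw [mul_comm, mul_comm _ k, ← smul_eq_mul, ← map_smul, ← smul_eq_mul, ← map_smul, ← map_add]
  simp

theorem HasDerivAt.sum_sq_sub {ι : Type*} [Fintype ι] {g : ℝ → ι → ℝ} {g' X : ι → ℝ} {θ₀ : ℝ}
    (hg : ∀ j, HasDerivAt (fun θ => g θ j) (g' j) θ₀) :
    HasDerivAt (fun θ => ∑ j, (X j - g θ j) ^ 2) (∑ j, 2 * (g θ₀ j - X j) * g' j) θ₀ := by
  refine HasDerivAt.fun_sum fun j _ => (((hg j).const_sub (X j)).pow 2).congr_deriv ?_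
  ring

theorem IsCompact.exists_forall_norm_sub_sub_fderiv_le_of_convex {E F : Type*}
    [NormedAddCommGroup E] [NormedSpace ℝ E] [NormedAddCommGroup F] [NormedSpace ℝ F]
    {G : E → F} {K : Set E} (hK : IsCompact K) (hKc : Convex ℝ K) (hG : ContDiff ℝ 1 G)
    {ε : ℝ} (hε : 0 < ε) :
    ∃ η > 0, ∀ q ∈ K, ∀ q' ∈ K, ‖q' - q‖ ≤ η →
      ‖G q' - G q - fderiv ℝ G q (q' - q)‖ ≤ ε * ‖q' - q‖ := by
  obtain ⟨η, hη, hunif⟩ := Metric.uniformContinuousOn_iff_le.1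
    (hK.uniformContinuousOn_of_continuous (hG.continuous_fderiv one_ne_zero).continuousOn) ε hε
  refine ⟨η, hη, fun q hq q' hq' hqq' => ?_⟩
  refine (convex_segment q q').norm_image_sub_le_of_norm_hasFDerivWithin_le'
    (fun w _ => ((hG.differentiable one_ne_zero) w).hasFDerivAt.hasFDerivWithinAt)
    (fun w hw => ?_) (left_mem_segment ℝ q q') (right_mem_segment ℝ q q')
  have hw_ball : w ∈ Metric.closedBall q ‖q' - q‖ :=
    (convex_closedBall q _).segment_subset (Metric.mem_closedBall_self (norm_nonneg _))
      (by rw [Metric.mem_closedBall, dist_eq_norm]) hw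
  rw [← dist_eq_norm]
  exact hunif w (hKc.segment_subset hq hq' hw) q hq (le_trans hw_ball hqq')

theorem IsCompact.exists_forall_norm_sub_sub_fderiv_le {E F : Type*} [NormedAddCommGroup E]
    [NormedSpace ℝ E] [ProperSpace E] [NormedAddCommGroup F] [NormedSpace ℝ F] {G : E → F}
    {S : Set E} (hS : IsCompact S) (hG : ContDiff ℝ 1 G) {ε : ℝ} (hε : 0 < ε) :
    ∃ η > 0, ∀ q ∈ S, ∀ q', ‖q' - q‖ ≤ η →
      ‖G q' - G q - fderiv ℝ G q (q' - q)‖ ≤ ε * ‖q' - q‖ := by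
  obtain ⟨R, hR⟩ := hS.isBounded.subset_closedBall 0
  obtain ⟨η, hη, hG⟩ := (isCompact_closedBall (0 : E) (R + 1))
    |>.exists_forall_norm_sub_sub_fderiv_le_of_convex (convex_closedBall 0 _) hG hε
  have hball : ∀ q ∈ S, ∀ q', ‖q' - q‖ ≤ 1 → q' ∈ Metric.closedBall (0 : E) (R + 1) :=
    fun q hq q' hq' => by
      have := mem_closedBall_zero_iff.1 (hR hq)
      rw [mem_closedBall_zero_iff]
      linarith [norm_le_norm_add_norm_sub' q' q]
  refine ⟨min η 1, by positivity, fun q hq q' hqq' => hG q ?_ q' ?_ (hqq'.trans (min_le_left _ _))⟩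
  · exact hball q hq q (by simp)
  · exact hball q hq q' (hqq'.trans (min_le_right _ _))

theorem gronwallBound_δ0 (K ε x : ℝ) : gronwallBound 0 K ε x = ε * gronwallBound 0 K 1 x := by
  by_cases hK : K = 0
  · simp [gronwallBound_K0, hK]
  · simp only [gronwallBound_of_K_ne_0 hK]
    ring

theorem ContinuousOn.lt_of_bootstrap {g : ℝ → ℝ} {a b B M : ℝ} (hg : ContinuousOn g (Icc a b))
    (hBM : B < M) (h : ∀ s ∈ Icc a b, (∀ r ∈ Ico a s, g r < M) → g s ≤ B) :
    ∀ s ∈ Icc a b, g s < M := by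
  by_contra! ⟨s, hs, hMs⟩
  set S := Icc a b ∩ g ⁻¹' Ici M
  have hS : IsClosed S := hg.preimage_isClosed_of_isClosed isClosed_Icc isClosed_Ici
  have hS₀ : sInf S ∈ S := hS.csInf_mem ⟨s, hs, hMs⟩ ⟨a, fun r hr => hr.1.1⟩
  have hbefore : ∀ r ∈ Ico a (sInf S), g r < M := fun r hr => not_le.1 fun hMr =>
    hr.2.not_ge (csInf_le ⟨a, fun r hr => hr.1.1⟩ ⟨⟨hr.1, hr.2.le.trans hS₀.1.2⟩, hMr⟩)
  exact absurd (h _ hS₀.1 hbefore) (hBM.trans_le hS₀.2).not_ge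

theorem abs_sub_sub_mul_le_gronwallBound {F : ℝ × ℝ → ℝ} {D : ℝ → ℝ × ℝ →L[ℝ] ℝ}
    {x₁ x₀ y : ℝ → ℝ} {θ₁ θ₀ a b L δ : ℝ} (hab : a ≤ b)
    (hx₁ : ∀ r ∈ Icc a b, HasDerivAt x₁ (F (x₁ r, θ₁)) r)
    (hx₀ : ∀ r ∈ Icc a b, HasDerivAt x₀ (F (x₀ r, θ₀)) r)
    (hy : ∀ r ∈ Icc a b, HasDerivAt y (D r (y r, 1)) r)
    (ha : x₁ a - x₀ a - (θ₁ - θ₀) * y a = 0) (hD : ∀ r ∈ Ico a b, ‖D r‖ ≤ L)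
    (hR : ∀ r ∈ Ico a b, |F (x₁ r, θ₁) - F (x₀ r, θ₀) - D r (x₁ r - x₀ r, θ₁ - θ₀)| ≤ δ) :
    |x₁ b - x₀ b - (θ₁ - θ₀) * y b| ≤ gronwallBound 0 L δ (b - a) := by
  set z := fun r => x₁ r - x₀ r - (θ₁ - θ₀) * y r
  have hz : ∀ r ∈ Icc a b, HasDerivAt z
      (F (x₁ r, θ₁) - F (x₀ r, θ₀) - (θ₁ - θ₀) * D r (y r, 1)) r := fun r hr =>
    ((hx₁ r hr).sub (hx₀ r hr)).sub ((hy r hr).const_mul _)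
  refine norm_le_gronwallBound_of_norm_deriv_right_le (f := z)
    (fun r hr => (hz r hr).continuousAt.continuousWithinAt)
    (fun r hr => (hz r (Ico_subset_Icc_self hr)).hasDerivWithinAt) (by simp [z, ha])
    (fun r hr => ?_) b ⟨hab, le_rfl⟩
  have hlin : D r (x₁ r - x₀ r, θ₁ - θ₀) = D r (z r, 0) + (θ₁ - θ₀) * D r (y r, 1) := by
    rw [← smul_eq_mul, ← map_smul, ← map_add]
    congr 1
    ext <;> simp [z]
  have hz0 : ‖((z r, 0) : ℝ × ℝ)‖ = ‖z r‖ := by simp [Prod.norm_def]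
  calc ‖F (x₁ r, θ₁) - F (x₀ r, θ₀) - (θ₁ - θ₀) * D r (y r, 1)‖
      = ‖D r (z r, 0) + (F (x₁ r, θ₁) - F (x₀ r, θ₀) - D r (x₁ r - x₀ r, θ₁ - θ₀))‖ := by
        rw [hlin]; ring_nf
    _ ≤ ‖D r‖ * ‖z r‖ + δ := by
        grw [norm_add_le, ← hz0, (D r).le_opNorm, Real.norm_eq_abs, hR r hr]
    _ ≤ L * ‖z r‖ + δ := by grw [hD r hr]

theorem abs_sub_sub_mul_le_of_tube {F : ℝ × ℝ → ℝ} {S : Set (ℝ × ℝ)} {T x₀ θ₀ θ s L ε ρ : ℝ}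
    {x : ℝ → ℝ → ℝ} (hx0 : ∀ θ, x θ 0 = x₀)
    (hx : ∀ θ, ∀ s ∈ Icc (0 : ℝ) T, HasDerivAt (x θ) (F (x θ s, θ)) s) {y : ℝ → ℝ}
    (hy0 : y 0 = 0) (hy : ∀ s ∈ Icc (0 : ℝ) T, HasDerivAt y (fderiv ℝ F (x θ₀ s, θ₀) (y s, 1)) s)
    (hS : ∀ r ∈ Icc (0 : ℝ) T, (x θ₀ r, θ₀) ∈ S) (hL : ∀ q ∈ S, ‖fderiv ℝ F q‖ ≤ L)
    (hε : 0 ≤ ε) (hTaylor : ∀ q ∈ S, ∀ q', ‖q' - q‖ ≤ ρ →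
      ‖F q' - F q - fderiv ℝ F q (q' - q)‖ ≤ ε * ‖q' - q‖)
    (hs : s ∈ Icc (0 : ℝ) T) (hθ : |θ - θ₀| ≤ ρ) (htube : ∀ r ∈ Ico 0 s, |x θ r - x θ₀ r| ≤ ρ) :
    |x θ s - x θ₀ s - (θ - θ₀) * y s| ≤ ε * ρ * gronwallBound 0 L 1 s := by
  have hsub : Icc 0 s ⊆ Icc 0 T := Icc_subset_Icc le_rfl hs.2
  have hbound := abs_sub_sub_mul_le_gronwallBound (L := L) (δ := ε * ρ) hs.1
    (fun r hr => hx θ r (hsub hr)) (fun r hr => hx θ₀ r (hsub hr)) (fun r hr => hy r (hsub hr))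
    (by simp [hx0, hy0]) (fun r hr => hL _ (hS r (hsub (Ico_subset_Icc_self hr))))
    (fun r hr => ?_)
  · rwa [sub_zero, gronwallBound_δ0] at hbound
  have hdist : ‖((x θ r, θ) : ℝ × ℝ) - (x θ₀ r, θ₀)‖ ≤ ρ := by
    rw [Prod.mk_sub_mk, Prod.norm_def, Real.norm_eq_abs, Real.norm_eq_abs]
    exact max_le (htube r hr) hθ
  have := hTaylor _ (hS r (hsub (Ico_subset_Icc_self hr))) (x θ r, θ) hdist
  rw [Prod.mk_sub_mk, Real.norm_eq_abs] at this
  exact this.trans (mul_le_mul_of_nonneg_left (by rwa [Prod.mk_sub_mk] at hdist) hε)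

theorem eventually_forall_abs_sub_sub_mul_le {F : ℝ × ℝ → ℝ} (hF : ContDiff ℝ 1 F)
    {T x₀ θ₀ : ℝ} (hT : 0 ≤ T) {x : ℝ → ℝ → ℝ} (hx0 : ∀ θ, x θ 0 = x₀)
    (hx : ∀ θ, ∀ s ∈ Icc (0 : ℝ) T, HasDerivAt (x θ) (F (x θ s, θ)) s) {y : ℝ → ℝ}
    (hy0 : y 0 = 0) (hy : ∀ s ∈ Icc (0 : ℝ) T, HasDerivAt y (fderiv ℝ F (x θ₀ s, θ₀) (y s, 1)) s)
    {ε : ℝ} (hε : 0 < ε) :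
    ∀ᶠ θ in 𝓝 θ₀, ∀ s ∈ Icc (0 : ℝ) T, |x θ s - x θ₀ s - (θ - θ₀) * y s| ≤ ε * |θ - θ₀| := by
  have hT0 : (0 : ℝ) ∈ Icc 0 T := ⟨le_rfl, hT⟩
  have hxc : ∀ θ, ContinuousOn (x θ) (Icc 0 T) := fun θ s hs =>
    (hx θ s hs).continuousAt.continuousWithinAt
  set S := (fun r => (x θ₀ r, θ₀)) '' Icc 0 T
  have hS : IsCompact S := isCompact_Icc.image_of_continuousOn ((hxc θ₀).prodMk continuousOn_const)
  obtain ⟨L, hL⟩ := hS.exists_bound_of_continuousOn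
    (hF.continuous_fderiv one_ne_zero).continuousOn
  have hL0 : 0 ≤ L := (norm_nonneg _).trans (hL _ (mem_image_of_mem _ hT0))
  obtain ⟨My, hMy⟩ := isCompact_Icc.exists_bound_of_continuousOn
    fun s hs => (hy s hs).continuousAt.continuousWithinAt
  -- The tube has radius `M |θ - θ₀|` with `M > sup |y|`, leaving room beyond the linear part
  -- `(θ - θ₀) y` for the Grönwall error.
  set M := My + 1
  have hM : 1 ≤ M := by linarith [(norm_nonneg _).trans (hMy 0 hT0)]
  set C := gronwallBound 0 L 1 T
  have hC : ∀ s ∈ Icc (0 : ℝ) T, gronwallBound 0 L 1 s ≤ C := fun s hs =>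
    gronwallBound_mono le_rfl zero_le_one hL0 hs.2
  have hC0 : 0 ≤ C := by simpa [gronwallBound_x0] using hC 0 hT0
  obtain ⟨ε', hε', hε'C⟩ : ∃ ε' > 0, ε' * (M * C) < min ε 1 :=
    ⟨min ε 1 / (M * C + 1), by positivity, by
      rw [div_mul_eq_mul_div, div_lt_iff₀ (by positivity)]; nlinarith [lt_min hε one_pos]⟩
  obtain ⟨η, hη, hTaylor⟩ := hS.exists_forall_norm_sub_sub_fderiv_le hF hε'
  filter_upwards [Metric.ball_mem_nhds θ₀ (show 0 < η / M by positivity)] with θ hθ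
  rcases eq_or_ne θ θ₀ with rfl | hne
  · simp
  set Δ := |θ - θ₀|
  have hΔ : 0 < Δ := abs_pos.2 (sub_ne_zero.2 hne)
  have hMΔ : M * Δ ≤ η := by
    rw [Metric.mem_ball, Real.dist_eq, lt_div_iff₀ (by positivity)] at hθ; linarith
  have hkey : ∀ s ∈ Icc (0 : ℝ) T, (∀ r ∈ Ico 0 s, |x θ r - x θ₀ r| < M * Δ) →
      |x θ s - x θ₀ s - (θ - θ₀) * y s| ≤ ε' * (M * C) * Δ := fun s hs htube => calc
    _ ≤ ε' * (M * Δ) * gronwallBound 0 L 1 s :=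
      abs_sub_sub_mul_le_of_tube hx0 hx hy0 hy (fun r hr => mem_image_of_mem _ hr) hL hε'.le
        (fun q hq q' hq' => hTaylor q hq q' (hq'.trans hMΔ)) hs
        (le_mul_of_one_le_left hΔ.le hM) fun r hr => (htube r hr).le
    _ ≤ ε' * (M * Δ) * C := by gcongr; exact hC s hs
    _ = ε' * (M * C) * Δ := by ring
  have htube : ∀ s ∈ Icc (0 : ℝ) T, |x θ s - x θ₀ s| < M * Δ := by
    refine ((hxc θ).sub (hxc θ₀)).abs.lt_of_bootstrap (B := (ε' * (M * C) + My) * Δ) ?_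
      fun s hs htube => ?_
    · nlinarith [min_le_right ε 1]
    calc |x θ s - x θ₀ s|
        ≤ |x θ s - x θ₀ s - (θ - θ₀) * y s| + Δ * |y s| := by
          rw [← abs_mul]; linarith [abs_sub_abs_le_abs_sub (x θ s - x θ₀ s) ((θ - θ₀) * y s)]
      _ ≤ (ε' * (M * C) + My) * Δ := by
          grw [hkey s hs htube, ← Real.norm_eq_abs, hMy s hs]; linarith
  intro s hs
  calc |x θ s - x θ₀ s - (θ - θ₀) * y s| ≤ ε' * (M * C) * Δ :=
        hkey s hs fun r hr => htube r ⟨hr.1, hr.2.le.trans hs.2⟩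
    _ ≤ ε * Δ := by nlinarith [min_le_left ε 1]

theorem hasDerivAt_apply_of_variational {F : ℝ × ℝ → ℝ} (hF : ContDiff ℝ 1 F)
    {T x₀ θ₀ : ℝ} {x : ℝ → ℝ → ℝ} (hx0 : ∀ θ, x θ 0 = x₀)
    (hx : ∀ θ, ∀ s ∈ Icc (0 : ℝ) T, HasDerivAt (x θ) (F (x θ s, θ)) s) {y : ℝ → ℝ}
    (hy0 : y 0 = 0) (hy : ∀ s ∈ Icc (0 : ℝ) T, HasDerivAt y (fderiv ℝ F (x θ₀ s, θ₀) (y s, 1)) s)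
    {s : ℝ} (hs : s ∈ Icc (0 : ℝ) T) :
    HasDerivAt (fun θ => x θ s) (y s) θ₀ := by
  refine hasDerivAt_iff_isLittleO.2 (Asymptotics.isLittleO_iff.2 fun ε hε => ?_)
  filter_upwards [eventually_forall_abs_sub_sub_mul_le hF (hs.1.trans hs.2) hx0 hx hy0 hy hε]
    with θ hθ
  simpa only [Real.norm_eq_abs, smul_eq_mul] using hθ s hs

theorem exists_hasDerivAt_eq_mul_add {A B : ℝ → ℝ} (hA : Continuous A) (hB : Continuous B) :
    ∃ y : ℝ → ℝ, y 0 = 0 ∧ ∀ s, HasDerivAt y (A s * y s + B s) s := by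
  set E := fun s => ∫ r in (0 : ℝ)..s, A r
  have hE : ∀ s, HasDerivAt E (A s) s := fun s => hA.integral_hasStrictDerivAt 0 s |>.hasDerivAt
  have hEc : Continuous E := continuous_iff_continuousAt.2 fun s => (hE s).continuousAt
  refine ⟨fun s => Real.exp (E s) * ∫ r in (0 : ℝ)..s, Real.exp (-E r) * B r, by simp, fun s => ?_⟩
  have hI := ((hEc.neg.rexp).mul hB).integral_hasStrictDerivAt 0 s |>.hasDerivAt
  refine ((hE s).exp.mul hI).congr_deriv ?_
  simp only [Pi.mul_apply, Pi.neg_apply, Real.exp_neg]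
  field_simp

theorem exists_hasDerivAt_eq_mul_add_of_continuousOn {A B : ℝ → ℝ} {T : ℝ} (hT : 0 ≤ T)
    (hA : ContinuousOn A (Icc 0 T)) (hB : ContinuousOn B (Icc 0 T)) :
    ∃ y : ℝ → ℝ, y 0 = 0 ∧ ∀ s ∈ Icc (0 : ℝ) T, HasDerivAt y (A s * y s + B s) s := by
  have hproj : Continuous fun s => (projIcc 0 T hT s : ℝ) :=
    continuous_subtype_val.comp continuous_projIcc
  obtain ⟨y, hy0, hy⟩ := exists_hasDerivAt_eq_mul_add
    (hA.comp_continuous hproj fun s => Subtype.mem _)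
    (hB.comp_continuous hproj fun s => Subtype.mem _)
  refine ⟨y, hy0, fun s hs => ?_⟩
  simpa [Function.comp, projIcc_of_mem hT hs] using hy s

theorem exists_hasDerivAt_apply_param {F : ℝ × ℝ → ℝ} (hF : ContDiff ℝ 1 F) {T x₀ θ₀ : ℝ}
    (hT : 0 ≤ T) {x : ℝ → ℝ → ℝ} (hx0 : ∀ θ, x θ 0 = x₀)
    (hx : ∀ θ, ∀ s ∈ Icc (0 : ℝ) T, HasDerivAt (x θ) (F (x θ s, θ)) s) :
    ∃ y : ℝ → ℝ, y 0 = 0 ∧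
      (∀ s ∈ Icc (0 : ℝ) T, HasDerivAt y
        (fderiv ℝ F (x θ₀ s, θ₀) (1, 0) * y s + fderiv ℝ F (x θ₀ s, θ₀) (0, 1)) s) ∧
      ∀ s ∈ Icc (0 : ℝ) T, HasDerivAt (fun θ => x θ s) (y s) θ₀ := by
  have hD : ContinuousOn (fun s => fderiv ℝ F (x θ₀ s, θ₀)) (Icc 0 T) :=
    (hF.continuous_fderiv one_ne_zero).comp_continuousOn
      (ContinuousOn.prodMk (fun s hs => (hx θ₀ s hs).continuousAt.continuousWithinAt)
        continuousOn_const)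
  obtain ⟨y, hy0, hy⟩ := exists_hasDerivAt_eq_mul_add_of_continuousOn hT
    (hD.clm_apply continuousOn_const) (hD.clm_apply continuousOn_const)
  refine ⟨y, hy0, hy, fun s hs => hasDerivAt_apply_of_variational hF hx0 hx hy0 (fun r hr => ?_) hs⟩
  rw [ContinuousLinearMap.apply_prod_eq, mul_one]
  exact hy r hr

theorem ContinuousWithinAt.eq_of_forall_gt_eq {p : ℝ → ℝ} {T v : ℝ}
    (hp : ContinuousWithinAt p (Ici T) T) (hafter : ∀ s, T < s → p s = v) : p T = v :=
  tendsto_nhds_unique (hp.tendsto.mono_left (nhdsWithin_mono _ Ioi_subset_Ici_self))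
    (tendsto_const_nhds.congr' (eventually_nhdsWithin_of_forall fun s hs => (hafter s hs).symm))

theorem HasDerivAt.comp_min_const {y : ℝ → ℝ} {y' s c : ℝ} (hy : HasDerivAt y y' s) (hs : s ≠ c) :
    HasDerivAt (fun r => y (min r c)) (if s < c then y' else 0) s := by
  rcases hs.lt_or_gt with hlt | hgt
  · rw [if_pos hlt]
    refine hy.congr_of_eventuallyEq ?_
    filter_upwards [Iio_mem_nhds hlt] with r hr
    rw [min_eq_left hr.le]
  · rw [if_neg hgt.not_gt]
    refine (hasDerivAt_const s (y c)).congr_of_eventuallyEq ?_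
    filter_upwards [Ioi_mem_nhds hgt] with r hr
    rw [min_eq_right hr.le]

section Jumps

variable {ι : Type*} [Fintype ι] (t J : ι → ℝ)

noncomputable def jumpsAfter (s : ℝ) : ℝ := ∑ j, if s < t j then J j else 0

variable {t J}

theorem jumpsAfter_eventuallyEq_nhds {s : ℝ} (hs : ∀ j, s ≠ t j) :
    jumpsAfter t J =ᶠ[𝓝 s] fun _ => jumpsAfter t J s := by
  have h : ∀ j, ∀ᶠ r in 𝓝 s, (r < t j ↔ s < t j) := by
    intro j
    rcases (hs j).lt_or_gt with hlt | hgt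
    · filter_upwards [Iio_mem_nhds hlt] with r hr using iff_of_true hr hlt
    · filter_upwards [Ioi_mem_nhds hgt] with r hr using iff_of_false hr.not_gt hgt.not_gt
  filter_upwards [eventually_all.2 h] with r hr
  simp only [jumpsAfter, hr]

theorem jumpsAfter_eventuallyEq_nhdsGE (s : ℝ) :
    jumpsAfter t J =ᶠ[𝓝[≥] s] fun _ => jumpsAfter t J s := by
  have h : ∀ j, ∀ᶠ r in 𝓝[≥] s, (r < t j ↔ s < t j) := by
    intro j
    by_cases hlt : s < t j
    · filter_upwards [nhdsWithin_le_nhds (Iio_mem_nhds hlt)] with r hr using iff_of_true hr hlt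
    · filter_upwards [self_mem_nhdsWithin] with r (hr : s ≤ r)
      exact iff_of_false (fun h => hlt (hr.trans_lt h)) hlt
  filter_upwards [eventually_all.2 h] with r hr
  simp only [jumpsAfter, hr]

theorem jumpsAfter_eventuallyEq_nhdsLT (ht : Function.Injective t) (k : ι) :
    jumpsAfter t J =ᶠ[𝓝[<] t k] fun _ => jumpsAfter t J (t k) + J k := by
  classical
  have h : ∀ j, ∀ᶠ r in 𝓝[<] t k, (r < t j ↔ t k ≤ t j) := by
    intro j
    by_cases hle : t k ≤ t j
    · filter_upwards [self_mem_nhdsWithin] with r (hr : r < t k)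
      exact iff_of_true (hr.trans_le hle) hle
    · filter_upwards [nhdsWithin_le_nhds (Ioi_mem_nhds (not_le.1 hle))] with r hr
      exact iff_of_false hr.not_gt hle
  have hsplit : ∀ j, (if t k ≤ t j then J j else 0) =
      (if t k < t j then J j else 0) + if k = j then J j else 0 := by
    intro j
    rcases lt_trichotomy (t k) (t j) with hlt | heq | hgt
    · simp [hlt, hlt.le, ht.ne_iff.1 hlt.ne]
    · simp [ht heq]
    · simp [hgt.not_gt, hgt.not_ge, ht.ne_iff.1 hgt.ne']
  filter_upwards [eventually_all.2 h] with r hr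
  simp only [jumpsAfter, hr, hsplit, Finset.sum_add_distrib, Finset.sum_ite_eq, Finset.mem_univ,
    if_true]

theorem intervalIntegrable_jumpsAfter (a b : ℝ) :
    IntervalIntegrable (jumpsAfter t J) volume a b := by
  have hsum : jumpsAfter t J = ∑ j, fun s => if s < t j then J j else 0 := by
    ext s
    simp [jumpsAfter]
  rw [hsum]
  refine IntervalIntegrable.sum Finset.univ fun j _ => ?_
  have h : (fun s => if s < t j then J j else 0) = (Iio (t j)).indicator (fun _ => J j) := by
    ext s; simp [Set.indicator_apply]
  rw [h, intervalIntegrable_iff]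
  exact (intervalIntegrable_iff.1 intervalIntegrable_const).indicator measurableSet_Iio

theorem continuousOn_sub_jumpsAfter {p : ℝ → ℝ} {a b : ℝ} (ht : Function.Injective t)
    (hright : ∀ s ∈ Icc a b, ContinuousWithinAt p (Ici s) s)
    (hjump : ∀ j, Tendsto p (𝓝[<] t j) (𝓝 (p (t j) + J j)))
    (hleft : ∀ s ∈ Ioc a b, (∀ j, s ≠ t j) → Tendsto p (𝓝[<] s) (𝓝 (p s))) :
    ContinuousOn (fun s => p s - jumpsAfter t J s) (Icc a b) := by
  intro s hs
  have hGE : ContinuousWithinAt (fun s => p s - jumpsAfter t J s) (Ici s) s :=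
    (hright s hs).sub (continuousWithinAt_const.congr_of_eventuallyEq
      (jumpsAfter_eventuallyEq_nhdsGE s) rfl)
  rcases hs.1.eq_or_lt with rfl | has
  · exact hGE.mono Icc_subset_Ici_self
  have hLT : ContinuousWithinAt (fun s => p s - jumpsAfter t J s) (Iio s) s := by
    by_cases hst : ∃ k, s = t k
    · obtain ⟨k, rfl⟩ := hst
      have := (hjump k).sub
        (tendsto_const_nhds.congr' (jumpsAfter_eventuallyEq_nhdsLT (J := J) ht k).symm)
      simpa only [ContinuousWithinAt, add_sub_add_right_eq_sub] using this
    · push Not at hst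
      exact (hleft s ⟨has, hs.2⟩ hst).sub
        (continuousAt_const.congr (jumpsAfter_eventuallyEq_nhds hst).symm).continuousWithinAt
  exact (hLT.union hGE).mono fun r _ => lt_or_ge r s

theorem integral_mul_eq_of_hasDerivAt_adjoint {p y A B : ℝ → ℝ} {a b : ℝ} (hab : a ≤ b)
    (ht : Function.Injective t) (htmem : ∀ j, t j ∈ Ioc a b) (hB : ContinuousOn B (Icc a b))
    (hy : ∀ s ∈ Icc a b, HasDerivAt y (A s * y s + B s) s)
    (hright : ∀ s ∈ Icc a b, ContinuousWithinAt p (Ici s) s)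
    (hjump : ∀ j, Tendsto p (𝓝[<] t j) (𝓝 (p (t j) + J j)))
    (hleft : ∀ s ∈ Ioc a b, (∀ j, s ≠ t j) → Tendsto p (𝓝[<] s) (𝓝 (p s)))
    (hp : ∀ s ∈ Ioo a b, (∀ j, s ≠ t j) → HasDerivAt p (-A s * p s) s) :
    ∫ s in a..b, p s * B s = p b * y b - p a * y a + ∑ j, J j * y (t j) := by
  set q := fun s => p s - jumpsAfter t J s
  have hq : ContinuousOn q (Icc a b) := continuousOn_sub_jumpsAfter ht hright hjump hleft
  have hyc : ContinuousOn y (Icc a b) := fun s hs => (hy s hs).continuousAt.continuousWithinAt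
  have hmin_mem : ∀ j, MapsTo (fun s => min s (t j)) (Icc a b) (Icc a b) := fun j s hs =>
    ⟨le_min hs.1 (htmem j).1.le, (min_le_left _ _).trans hs.2⟩
  have hFTC := integral_eq_of_hasDerivAt_off_countable_of_le
    (fun s => q s * y s + ∑ j, J j * y (min s (t j))) (fun s => p s * B s) hab
    (countable_range t) ?_ ?_ ?_
  · have hb : jumpsAfter t J b = 0 := Finset.sum_eq_zero fun j _ => if_neg (htmem j).2.not_gt
    have ha : jumpsAfter t J a = ∑ j, J j := Finset.sum_congr rfl fun j _ => if_pos (htmem j).1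
    have hminb : ∑ j, J j * y (min b (t j)) = ∑ j, J j * y (t j) :=
      Finset.sum_congr rfl fun j _ => by rw [min_eq_right (htmem j).2]
    have hmina : ∑ j, J j * y (min a (t j)) = (∑ j, J j) * y a := by
      rw [Finset.sum_mul]
      exact Finset.sum_congr rfl fun j _ => by rw [min_eq_left (htmem j).1.le]
    rw [hFTC, hminb, hmina]
    simp only [q, hb, ha]
    ring
  · exact (hq.mul hyc).add (continuousOn_finsetSum _ fun j _ =>
      continuousOn_const.mul (hyc.comp (continuous_id.min continuous_const).continuousOn
        (hmin_mem j)))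
  · intro s ⟨hs, hst⟩
    have hst' : ∀ j, s ≠ t j := fun j h => hst ⟨j, h.symm⟩
    have hys := hy s (Ioo_subset_Icc_self hs)
    have hq' : HasDerivAt q (-A s * p s - 0) s := (hp s hs hst').sub
      ((hasDerivAt_const s _).congr_of_eventuallyEq (jumpsAfter_eventuallyEq_nhds hst'))
    have hsum := HasDerivAt.fun_sum (u := Finset.univ) fun j _ =>
      (hys.comp_min_const (hst' j)).const_mul (J j)
    refine ((hq'.mul hys).add hsum).congr_deriv ?_
    have hjumps : ∑ j, J j * (if s < t j then A s * y s + B s else 0) =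
        jumpsAfter t J s * (A s * y s + B s) := by
      simp only [jumpsAfter, Finset.sum_mul]
      exact Finset.sum_congr rfl fun j _ => by split_ifs <;> ring
    rw [hjumps]
    ring
  · have hpB : (fun s => p s * B s) = fun s => q s * B s + jumpsAfter t J s * B s := by
      ext s
      ring
    rw [hpB]
    exact ((hq.mul hB).intervalIntegrable_of_Icc hab).add
      ((intervalIntegrable_jumpsAfter a b).mul_continuousOn (by rwa [uIcc_of_le hab]))

end Jumps

theorem adjoint_with_jumps_loss_gradient_general {N : ℕ}
    (f : ℝ → ℝ → ℝ → ℝ)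
    (hf : ContDiff ℝ 1 (fun q : ℝ × ℝ × ℝ => f q.1 q.2.1 q.2.2))
    (c T x₀ θ₀ : ℝ) (hT : 0 < T)
    (x : ℝ → ℝ → ℝ)
    (hx0 : ∀ θ, x θ 0 = x₀)
    (hx : ∀ θ, ∀ s ∈ Icc (0:ℝ) T, HasDerivAt (x θ) (f (x θ s) c θ) s)
    (t : Fin N → ℝ) (ht : StrictMono t) (htmem : ∀ j, t j ∈ Ioc (0:ℝ) T)
    (X : Fin N → ℝ)
    (p : ℝ → ℝ)
    (hpafter : ∀ s, T < s → p s = 0)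
    (hpright : ∀ s ∈ Icc (0:ℝ) T, ContinuousWithinAt p (Ici s) s)
    (hpjump : ∀ j, Filter.Tendsto p (nhdsWithin (t j) (Iio (t j)))
      (nhds (p (t j) + 2 * (x θ₀ (t j) - X j))))
    (hpleft : ∀ s ∈ Ioc (0:ℝ) T, (∀ j, s ≠ t j) →
      Filter.Tendsto p (nhdsWithin s (Iio s)) (nhds (p s)))
    (hp : ∀ s ∈ Ioo (0:ℝ) T, (∀ j, s ≠ t j) →
      HasDerivAt p (-(deriv (fun u => f u c θ₀) (x θ₀ s)) * p s) s) :
    HasDerivAt (fun θ => ∑ j, (X j - x θ (t j)) ^ 2)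
      (∫ s in (0:ℝ)..T, p s * deriv (fun u => f (x θ₀ s) c u) θ₀) θ₀ := by
  set F : ℝ × ℝ → ℝ := fun q => f q.1 c q.2
  have hF : ContDiff ℝ 1 F := hf.comp (contDiff_fst.prodMk (contDiff_const.prodMk contDiff_snd))
  set D := fun s => fderiv ℝ F (x θ₀ s, θ₀)
  have hD : ∀ s, HasFDerivAt F (D s) (x θ₀ s, θ₀) := fun s =>
    (hF.differentiable one_ne_zero _).hasFDerivAt
  have hA : ∀ s, deriv (fun u => f u c θ₀) (x θ₀ s) = D s (1, 0) := fun s =>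
    (hD s).hasDerivAt_comp_prodMk_left.deriv
  have hB : ∀ s, deriv (fun u => f (x θ₀ s) c u) θ₀ = D s (0, 1) := fun s =>
    (hD s).hasDerivAt_comp_prodMk_right.deriv
  have hBc : ContinuousOn (fun s => D s (0, 1)) (Icc 0 T) :=
    (hF.continuous_fderiv one_ne_zero).comp_continuousOn
      (ContinuousOn.prodMk (fun s hs => (hx θ₀ s hs).continuousAt.continuousWithinAt)
        continuousOn_const) |>.clm_apply continuousOn_const
  obtain ⟨y, hy0, hy, hsens⟩ := exists_hasDerivAt_apply_param hF hT.le hx0 hx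
  have hadj := integral_mul_eq_of_hasDerivAt_adjoint (J := fun j => 2 * (x θ₀ (t j) - X j))
    hT.le ht.injective htmem hBc hy hpright hpjump hpleft
    fun s hs hst => by rw [← hA]; exact hp s hs hst
  have hpT : p T = 0 := (hpright T ⟨hT.le, le_rfl⟩).eq_of_forall_gt_eq hpafter
  simp only [hB, hadj, hpT, hy0, zero_mul, mul_zero, sub_zero, zero_add]
  exact HasDerivAt.sum_sq_sub fun j => hsens (t j) ⟨(htmem j).1.le, (htmem j).2⟩

/-- Adjoint sensitivity method with jump discontinuities for the discrete least-squares loss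
`L(θ) = Σ_j (X_j - x(t_j; θ))²` on the first method-of-steps interval: if the adjoint `p`
satisfies `p' = -(∂f/∂x) p` away from the sample times, is right-continuous, vanishes after
`T`, and has jumps `p(t_j⁻) = p(t_j⁺) + 2(x(t_j) - X_j)` at the sample times, then
`dL/dθ = ∫₀^T p(t) (∂f/∂θ)(x(t), c, θ) dt`. -/
theorem adjoint_with_jumps_loss_gradient {N : ℕ}
    (f : ℝ → ℝ → ℝ → ℝ)
    (hf : ContDiff ℝ 1 (fun q : ℝ × ℝ × ℝ => f q.1 q.2.1 q.2.2))
    (c τ T x₀ θ₀ : ℝ) (hτ : 0 < τ) (hT : 0 < T) (hTτ : T ≤ τ)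
    (x : ℝ → ℝ → ℝ)
    (hx0 : ∀ θ, x θ 0 = x₀)
    (hx : ∀ θ, ∀ s ∈ Icc (0:ℝ) T, HasDerivAt (x θ) (f (x θ s) c θ) s)
    (t : Fin N → ℝ) (ht : StrictMono t) (htmem : ∀ j, t j ∈ Ioc (0:ℝ) T)
    (X : Fin N → ℝ)
    (p : ℝ → ℝ)
    (hpafter : ∀ s, T < s → p s = 0)
    (hpright : ∀ s ∈ Icc (0:ℝ) T, ContinuousWithinAt p (Ici s) s)
    (hpjump : ∀ j, Filter.Tendsto p (nhdsWithin (t j) (Iio (t j)))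
      (nhds (p (t j) + 2 * (x θ₀ (t j) - X j))))
    (hpleft : ∀ s ∈ Ioc (0:ℝ) T, (∀ j, s ≠ t j) →
      Filter.Tendsto p (nhdsWithin s (Iio s)) (nhds (p s)))
    (hp : ∀ s ∈ Ioo (0:ℝ) T, (∀ j, s ≠ t j) →
      HasDerivAt p (-(deriv (fun u => f u c θ₀) (x θ₀ s)) * p s) s) :
    HasDerivAt (fun θ => ∑ j, (X j - x θ (t j)) ^ 2)
      (∫ s in (0:ℝ)..T, p s * deriv (fun u => f (x θ₀ s) c u) θ₀) θ₀ :=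
  adjoint_with_jumps_loss_gradient_general f hf c T x₀ θ₀ hT x hx0 hx t ht htmem X p hpafter hpright
    hpjump hpleft hp
end
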